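/- arXiv:1306.3954 — 4 statements merged into one kernel-verified Lean document; each statement's English description precedes it below -/
import Mathlib

section
/- Let I be a set and {G_i : i ∈ I} a family of groups each of which satisfies the ascending chain condition on subgroups (every ascending chain of subgroups stabilizes). Then a subgroup H of the direct product G = ∏_{i∈I} G_i is controllable in G if and only if it is uniformly controllable in G. -/
/-- Projection of an element of the direct product `∀ i, G i` to the
coordinates in `J`. -/
def proj {I : Type*} {G : I → Type*} (J : Set I) (g : ∀ i, G i) : ∀ j : J, G j :=
  fun j => g j

/-- A subgroup `H` of the direct product `G = ∏_{i ∈ I} G_i` is *controllable*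
in `G` if `p_J(H) = p_J(H ∩ ⊕_{i ∈ I} G_i)` for every finite `J ⊆ I`. -/
def Controllable {I : Type*} {G : I → Type*} [∀ i, Group (G i)]
    (H : Subgroup (∀ i, G i)) : Prop :=
  ∀ J : Set I, J.Finite →
    proj J '' (H : Set (∀ i, G i)) =
      proj J '' ((H : Set (∀ i, G i)) ∩ {g | {i | g i ≠ 1}.Finite})

/-- A subgroup `H` of the direct product `G = ∏_{i ∈ I} G_i` is *uniformly
controllable* in `G` if for every finite `J ⊆ I` there is a finite `K ⊆ I`
with `p_J(H) = p_J(H ∩ ⊕_{i ∈ K} G_i)`. -/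
def UniformlyControllable {I : Type*} {G : I → Type*} [∀ i, Group (G i)]
    (H : Subgroup (∀ i, G i)) : Prop :=
  ∀ J : Set I, J.Finite → ∃ K : Set I, K.Finite ∧
    proj J '' (H : Set (∀ i, G i)) =
      proj J '' ((H : Set (∀ i, G i)) ∩ {g | ∀ i ∉ K, g i = 1})

/-! Ascending chain conditions on subgroups pass to group extensions, hence to finite products.
Fix a finite `J`. The images in `∏_{j ∈ J} G_j` of the subgroups `H ∩ ⊕_{i ∈ K} G_i` grow with
the finite set `K`, so by the chain condition one of them is largest. It then contains the image
of `H ∩ ⊕_{i ∈ I} G_i`, which by controllability is the image of `H`. -/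

section AscendingChainCondition

variable {P A : Type*} [Group P] [Group A]

theorem Subgroup.le_of_map_le_of_comap_ker_le (φ : P →* A) {K L : Subgroup P} (hKL : K ≤ L)
    (hmap : L.map φ ≤ K.map φ) (hker : L.comap φ.ker.subtype ≤ K.comap φ.ker.subtype) :
    L ≤ K := by
  intro x hx
  obtain ⟨y, hy, hxy⟩ := hmap ⟨x, hx, rfl⟩
  have hxy_ker : x * y⁻¹ ∈ φ.ker := by simp [MonoidHom.mem_ker, hxy]
  have hxy_K : x * y⁻¹ ∈ K :=
    hker (x := ⟨_, hxy_ker⟩) (mul_mem hx (inv_mem (hKL hy)))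
  simpa using mul_mem hxy_K hy

theorem wellFoundedGT_subgroup_of_ker (φ : P →* A) [WellFoundedGT (Subgroup A)]
    [WellFoundedGT (Subgroup φ.ker)] : WellFoundedGT (Subgroup P) := by
  refine StrictMono.wellFoundedGT
    (f := fun K : Subgroup P => (K.map φ, K.comap φ.ker.subtype)) fun K L hKL => ?_
  refine lt_of_le_not_ge ⟨Subgroup.map_mono hKL.le, Subgroup.comap_mono hKL.le⟩ fun h => ?_
  exact hKL.not_ge (Subgroup.le_of_map_le_of_comap_ker_le φ hKL.le h.1 h.2)

variable {ι : Type*} {G : ι → Type*} [∀ i, Group (G i)] [∀ i, WellFoundedGT (Subgroup (G i))]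

theorem wellFoundedGT_subgroup_of_forall_eq_one (s : Finset ι) {P : Type*} [Group P]
    (φ : ∀ i, P →* G i) (hφ : ∀ x, (∀ i ∈ s, φ i x = 1) → x = 1) :
    WellFoundedGT (Subgroup P) := by
  classical
  induction s using Finset.induction generalizing P with
  | empty =>
    have : Subsingleton P := ⟨fun x y => by simp [hφ x (by simp), hφ y (by simp)]⟩
    infer_instance
  | insert a s _ ih =>
    have : WellFoundedGT (Subgroup (φ a).ker) :=
      ih (fun i => (φ i).comp (φ a).ker.subtype) fun x hx =>
        Subtype.ext <| hφ x <| (Finset.forall_mem_insert _ _ _).2 ⟨x.2, hx⟩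
    exact wellFoundedGT_subgroup_of_ker (φ a)

instance Pi.wellFoundedGT_subgroup [Finite ι] : WellFoundedGT (Subgroup (∀ i, G i)) := by
  cases nonempty_fintype ι
  exact wellFoundedGT_subgroup_of_forall_eq_one Finset.univ (Pi.evalMonoidHom G)
    fun x hx => funext fun i => hx i (Finset.mem_univ i)

end AscendingChainCondition

theorem Monotone.exists_forall_le_of_wellFoundedGT {ι α : Type*} [Preorder ι] [IsDirectedOrder ι]
    [Nonempty ι] [PartialOrder α] [WellFoundedGT α] {f : ι → α} (hf : Monotone f) :
    ∃ i, ∀ j, f j ≤ f i := by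
  obtain ⟨_, ⟨i, rfl⟩, hi⟩ := wellFounded_gt.has_min (Set.range f) (Set.range_nonempty f)
  refine ⟨i, fun j => ?_⟩
  obtain ⟨k, hik, hjk⟩ := directed_of (· ≤ ·) i j
  rw [eq_of_le_of_not_lt (hf hik) (hi _ ⟨k, rfl⟩)]
  exact hf hjk

section Controllability

variable {I : Type*} {G : I → Type*} [∀ i, Group (G i)] {H : Subgroup (∀ i, G i)}

theorem Controllable.uniformlyControllable [∀ i, WellFoundedGT (Subgroup (G i))]
    (hH : Controllable H) : UniformlyControllable H := by
  intro J hJ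
  have := hJ.to_subtype
  let π : (∀ i, G i) →* ∀ j : J, G j := MonoidHom.pi fun j => Pi.evalMonoidHom G j
  let D : Finset I → Subgroup (∀ j : J, G j) :=
    fun K => (H ⊓ Subgroup.pi (↑K)ᶜ fun _ => ⊥).map π
  have hD : Monotone D := fun K L hKL =>
    Subgroup.map_mono <| inf_le_inf_left H fun g hg i hi => hg i fun hiK => hi (hKL hiK)
  obtain ⟨K, hK⟩ := hD.exists_forall_le_of_wellFoundedGT
  refine ⟨K, K.finite_toSet, subset_antisymm ?_ (Set.image_mono Set.inter_subset_left)⟩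
  rw [hH J hJ]
  rintro _ ⟨g, ⟨hgH, hgfin⟩, rfl⟩
  obtain ⟨g', ⟨hg'H, hg'K⟩, hg'⟩ := hK hgfin.toFinset ⟨g, ⟨hgH, by simp [Subgroup.mem_pi]⟩, rfl⟩
  exact ⟨g', ⟨hg'H, by simpa [Subgroup.mem_pi] using hg'K⟩, hg'⟩

theorem UniformlyControllable.controllable (hH : UniformlyControllable H) : Controllable H := by
  intro J hJ
  obtain ⟨K, hKfin, hK⟩ := hH J hJ
  refine subset_antisymm ?_ (Set.image_mono Set.inter_subset_left)
  rw [hK]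
  exact Set.image_mono fun g ⟨hgH, hgK⟩ =>
    ⟨hgH, hKfin.subset fun i hi => by_contra fun hiK => hi (hgK i hiK)⟩

end Controllability

theorem controllable_iff_uniformlyControllable_of_acc
    {I : Type*} (G : I → Type*) [∀ i, Group (G i)]
    (hacc : ∀ i, ∀ c : ℕ → Subgroup (G i), (∀ n, c n ≤ c (n + 1)) →
      ∃ N, ∀ m, N ≤ m → c m = c N)
    (H : Subgroup (∀ i, G i)) :
    Controllable H ↔ UniformlyControllable H := by
  have (i : I) : WellFoundedGT (Subgroup (G i)) :=
    wellFoundedGT_iff_monotone_chain_condition.2 fun c =>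
      (hacc i c fun n => c.monotone n.le_succ).imp fun N hN m hm => (hN m hm).symm
  exact ⟨Controllable.uniformlyControllable, UniformlyControllable.controllable⟩
end

section
/- Let I be a set and {G_i : i ∈ I} a family of finite discrete topological groups. Then for every subgroup H of the direct product G = ∏_{i∈I} G_i (with the Tychonoff product topology) the following are equivalent: (i) H is weakly controllable in G; (ii) H is controllable in G; (iii) H is uniformly controllable in G. -/
/-- A subgroup `H` of the direct product `G = ∏_{i ∈ I} G_i` of topological
groups is *weakly controllable* in `G` if `H ∩ ⊕_{i ∈ I} G_i` is dense in `H`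
(with respect to the Tychonoff product topology). -/
def WeaklyControllable {I : Type*} {G : I → Type*} [∀ i, Group (G i)]
    [∀ i, TopologicalSpace (G i)] (H : Subgroup (∀ i, G i)) : Prop :=
  (H : Set (∀ i, G i)) ⊆ closure ((H : Set (∀ i, G i)) ∩ {g | {i | g i ≠ 1}.Finite})

/-!
Each `G i` being discrete, the basic open neighbourhoods of `g` in the product are the cylinders
`{x | x = g on J}` for finite `J`, so `g ∈ closure S` says exactly that `p_J g ∈ p_J(S)` for every
finite `J`; this is why weak controllability and controllability agree. Since every `G i` is
finite, so is `p_J(H)`, and choosing one finitely supported preimage in `H` for each of its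
finitely many elements yields a single finite `K` that serves all of them.
-/

section Closure

variable {I : Type*} {G : I → Type*} [∀ i, TopologicalSpace (G i)]

theorem mem_closure_of_forall_proj_mem {S : Set (∀ i, G i)} {g : ∀ i, G i}
    (h : ∀ J : Set I, J.Finite → proj J g ∈ proj J '' S) : g ∈ closure S := by
  refine mem_closure_iff.2 fun U hU hgU => ?_
  obtain ⟨J, u, hu, hJU⟩ := isOpen_pi_iff.1 hU g hgU
  obtain ⟨x, hxS, hxg⟩ := h J J.finite_toSet
  refine ⟨x, hJU fun i hi => ?_, hxS⟩
  have hxi : x i = g i := congrFun hxg ⟨i, hi⟩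
  exact hxi ▸ (hu i hi).2

theorem proj_mem_image_of_mem_closure [∀ i, DiscreteTopology (G i)] {S : Set (∀ i, G i)}
    {g : ∀ i, G i} (hg : g ∈ closure S) {J : Set I} (hJ : J.Finite) :
    proj J g ∈ proj J '' S := by
  have hcyl : IsOpen (J.pi fun i => {g i}) := isOpen_set_pi hJ fun i _ => isOpen_discrete _
  obtain ⟨x, hxg, hxS⟩ := mem_closure_iff.1 hg _ hcyl fun i _ => rfl
  exact ⟨x, hxS, funext fun j => hxg j j.2⟩

end Closure

section Controllability

variable {I : Type*} {G : I → Type*} [∀ i, Group (G i)] {H : Subgroup (∀ i, G i)}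

theorem controllable_iff_forall_proj_mem :
    Controllable H ↔ ∀ g ∈ H, ∀ J : Set I, J.Finite →
      proj J g ∈ proj J '' ((H : Set (∀ i, G i)) ∩ {g | {i | g i ≠ 1}.Finite}) := by
  refine ⟨fun hC g hg J hJ => hC J hJ ▸ ⟨g, hg, rfl⟩, fun h J hJ => ?_⟩
  refine (Set.image_mono Set.inter_subset_left).antisymm' ?_
  rintro _ ⟨g, hg, rfl⟩
  exact h g hg J hJ

theorem weaklyControllable_of_controllable [∀ i, TopologicalSpace (G i)]
    (hC : Controllable H) : WeaklyControllable H := fun g hg =>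
  mem_closure_of_forall_proj_mem (controllable_iff_forall_proj_mem.1 hC g hg)

theorem controllable_of_weaklyControllable [∀ i, TopologicalSpace (G i)]
    [∀ i, DiscreteTopology (G i)] (hW : WeaklyControllable H) : Controllable H :=
  controllable_iff_forall_proj_mem.2 fun _ hg _ => proj_mem_image_of_mem_closure (hW hg)

theorem controllable_of_uniformlyControllable (hU : UniformlyControllable H) :
    Controllable H := by
  refine controllable_iff_forall_proj_mem.2 fun g hg J hJ => ?_
  obtain ⟨K, hK, hJK⟩ := hU J hJ
  have hgJ : proj J g ∈ proj J '' (H : Set (∀ i, G i)) := ⟨g, hg, rfl⟩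
  rw [hJK] at hgJ
  obtain ⟨x, ⟨hxH, hxK⟩, hxg⟩ := hgJ
  exact ⟨x, ⟨hxH, hK.subset fun i hi => not_not.1 fun h => hi (hxK i h)⟩, hxg⟩

theorem uniformlyControllable_of_controllable [∀ i, Finite (G i)] (hC : Controllable H) :
    UniformlyControllable H := by
  intro J hJ
  have : Finite J := hJ.to_subtype
  have hlift : ∀ y : proj J '' (H : Set (∀ i, G i)),
      ∃ x ∈ (H : Set (∀ i, G i)) ∩ {g | {i | g i ≠ 1}.Finite}, proj J x = y := by
    rintro ⟨y, hy⟩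
    rwa [hC J hJ] at hy
  choose x hx hxy using hlift
  refine ⟨⋃ y, {i | x y i ≠ 1}, Set.finite_iUnion fun y => (hx y).2, ?_⟩
  refine (Set.image_mono Set.inter_subset_left).antisymm' ?_
  rintro _ ⟨g, hg, rfl⟩
  let y : proj J '' (H : Set (∀ i, G i)) := ⟨proj J g, g, hg, rfl⟩
  refine ⟨x y, ⟨(hx y).1, fun i hi => not_not.1 fun h => hi ?_⟩, hxy y⟩
  exact Set.mem_iUnion.2 ⟨y, h⟩

end Controllability

theorem weaklyControllable_iff_controllable_iff_uniformlyControllable_of_finite_general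
    {I : Type*} (G : I → Type*) [∀ i, Group (G i)] [∀ i, Finite (G i)]
    [∀ i, TopologicalSpace (G i)]
    [∀ i, DiscreteTopology (G i)]
    (H : Subgroup (∀ i, G i)) :
    (WeaklyControllable H ↔ Controllable H) ∧
      (Controllable H ↔ UniformlyControllable H) :=
  ⟨⟨controllable_of_weaklyControllable, weaklyControllable_of_controllable⟩,
    ⟨uniformlyControllable_of_controllable, controllable_of_uniformlyControllable⟩⟩

theorem weaklyControllable_iff_controllable_iff_uniformlyControllable_of_finite
    {I : Type*} (G : I → Type*) [∀ i, Group (G i)] [∀ i, Finite (G i)]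
    [∀ i, TopologicalSpace (G i)] [∀ i, IsTopologicalGroup (G i)]
    [∀ i, DiscreteTopology (G i)]
    (H : Subgroup (∀ i, G i)) :
    (WeaklyControllable H ↔ Controllable H) ∧
      (Controllable H ↔ UniformlyControllable H) :=
  weaklyControllable_iff_controllable_iff_uniformlyControllable_of_finite_general G H
end

section
/- Let I be a set, {G_i : i ∈ I} a family of topological groups, and H a subgroup of G = ∏_{i∈I} G_i (with the Tychonoff product topology) whose closure in G is compact. If H is uniformly controllable in G, then the closure of H in G is also uniformly controllable in G. -/
open Topology Filter

theorem ClusterPt.of_forall_eq_or_tendsto_apply {ι : Type*} {X : ι → Type*}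
    [∀ i, TopologicalSpace (X i)] {F : Filter (∀ i, X i)} {y z : ∀ i, X i}
    (hy : ClusterPt y F) (hz : ∀ i, z i = y i ∨ Tendsto (fun g => g i) F (𝓝 (z i))) :
    ClusterPt z F := by
  refine hy.neBot.mono (le_inf ?_ inf_le_right)
  rw [nhds_pi (a := z), le_pi]
  intro i
  rcases hz i with hzy | hFz
  · exact hzy ▸ ((continuous_apply i).tendsto y).mono_left inf_le_left
  · exact hFz.mono_left inf_le_right

theorem exists_mem_closure_proj_eq_of_isCompact_closure {ι : Type*} {X : ι → Type*}
    [∀ i, TopologicalSpace (X i)] {A : Set (∀ i, X i)} (hA : IsCompact (closure A))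
    {J K : Set ι} {c x : ∀ i, X i} (hAK : ∀ g ∈ A, ∀ i ∉ K, g i = c i)
    (hx : proj J x ∈ closure (proj J '' A)) :
    ∃ z ∈ closure A, proj J z = proj J x ∧ ∀ i ∉ K ∪ J, z i = c i := by
  classical
  set F := 𝓟 A ⊓ comap (proj J) (𝓝 (proj J x))
  have hFA : F ≤ 𝓟 A := inf_le_left
  have hF : F.NeBot := by
    rw [← map_neBot_iff (proj J), Filter.push_pull, map_principal, inf_comm]
    exact mem_closure_iff_clusterPt.1 hx
  obtain ⟨y, -, hy⟩ := hA (hFA.trans (principal_mono.2 subset_closure))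
  set z : ∀ i, X i := fun i => if i ∈ J then x i else if i ∈ K then y i else c i
  have hz : ClusterPt z F := by
    refine hy.of_forall_eq_or_tendsto_apply fun i => ?_
    by_cases hiJ : i ∈ J
    · right
      have hproj : Tendsto (proj J) F (𝓝 (proj J x)) := tendsto_comap.mono_left inf_le_right
      simp only [z, if_pos hiJ]
      exact ((continuous_apply (⟨i, hiJ⟩ : J)).tendsto _).comp hproj
    by_cases hiK : i ∈ K
    · simp [z, hiJ, hiK]
    · right
      simp only [z, hiJ, hiK, if_false]
      exact tendsto_const_nhds.congr' <|
        (eventually_principal.2 fun g hg => (hAK g hg i hiK).symm).filter_mono hFA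
  refine ⟨z, mem_closure_iff_clusterPt.2 (hz.mono hFA), ?_, ?_⟩
  · funext j
    simp [proj, z, j.2]
  · intro i hi
    simp only [Set.mem_union, not_or] at hi
    simp [z, hi.1, hi.2]

theorem closure_uniformlyControllable_of_compact_closure
    {I : Type*} (G : I → Type*) [∀ i, Group (G i)]
    [∀ i, TopologicalSpace (G i)] [∀ i, IsTopologicalGroup (G i)]
    (H : Subgroup (∀ i, G i))
    (hcomp : IsCompact (closure (H : Set (∀ i, G i))))
    (hu : UniformlyControllable H) :
    UniformlyControllable H.topologicalClosure := by
  intro J hJ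
  obtain ⟨K, hK, hKJ⟩ := hu J hJ
  set A := (H : Set (∀ i, G i)) ∩ {g | ∀ i ∉ K, g i = 1}
  have hAH : closure A ⊆ closure H := closure_mono Set.inter_subset_left
  have hA : IsCompact (closure A) := hcomp.of_isClosed_subset isClosed_closure hAH
  refine ⟨K ∪ J, hK.union hJ, ?_⟩
  refine (Set.image_mono Set.inter_subset_left).antisymm' ?_
  rintro _ ⟨x, hx, rfl⟩
  have hpx : proj J x ∈ closure (proj J '' A) :=
    hKJ ▸ image_closure_subset_closure_image (continuous_pi fun j => continuous_apply j.1)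
      ⟨x, hx, rfl⟩
  obtain ⟨z, hzA, hzx, hz1⟩ :=
    exists_mem_closure_proj_eq_of_isCompact_closure hA (fun g hg => hg.2) hpx
  exact ⟨z, ⟨hAH hzA, hz1⟩, hzx⟩
end

section
/- Let p be a prime and A a discrete abelian p-group (every element of A has order a power of p). Let Â denote the Pontryagin dual of A, i.e., the group of continuous homomorphisms from A to the circle group with the compact-open topology. If the torsion part t(Â) = {χ ∈ Â : nχ = 0 for some positive integer n} is dense in Â, then ⋂_{n∈ℕ} pⁿA = {0}. -/
/-!
Let `x ∈ ⋂ pⁿA` and let `χ` be a character of finite order `m`. Writing `x = pᵐ b`, the order of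
`χ b` is a power of `p` dividing `m`, hence it divides `pᵐ`, and so `χ x = 1`. The characters
killing `x` form a closed set containing the dense set of torsion characters, so every character
kills `x`. Characters of a discrete abelian group separate points (compose a `ℚ/ℤ`-valued
character with `ℚ/ℤ ↪ ℝ/ℤ ≅ 𝕋`), hence `x = 0`.
-/

theorem pow_prime_pow_eq_one_of_pow_eq_one {M : Type*} [Monoid M] {p : ℕ} (hp : p.Prime)
    {u : M} {e m : ℕ} (hue : u ^ p ^ e = 1) (hum : u ^ m = 1) (hm : 0 < m) :
    u ^ p ^ m = 1 := by
  obtain ⟨j, -, hj⟩ := (Nat.dvd_prime_pow hp).mp (orderOf_dvd_of_pow_eq_one hue)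
  have hjm : j ≤ m := by
    have : p ^ j ≤ m := Nat.le_of_dvd hm (hj ▸ orderOf_dvd_of_pow_eq_one hum)
    have := Nat.lt_pow_self (n := j) hp.one_lt
    omega
  exact orderOf_dvd_iff_pow_eq_one.mp (hj ▸ pow_dvd_pow p hjm)

theorem map_eq_one_of_forall_exists_pow_prime_pow_eq {G M F : Type*} [Monoid G] [Monoid M]
    [FunLike F G M] [MonoidHomClass F G M] {p : ℕ} (hp : p.Prime)
    (hG : ∀ g : G, ∃ e : ℕ, g ^ p ^ e = 1) (f : F) {m : ℕ} (hm : 0 < m)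
    (hf : ∀ g, f g ^ m = 1) {x : G} (hx : ∀ n : ℕ, ∃ b : G, b ^ p ^ n = x) : f x = 1 := by
  obtain ⟨b, rfl⟩ := hx m
  obtain ⟨e, he⟩ := hG b
  rw [map_pow]
  exact pow_prime_pow_eq_one_of_pow_eq_one hp (by rw [← map_pow, he, map_one]) (hf b) hm

namespace AddCircle

noncomputable def ratCastHom (q : ℚ) : AddCircle q →+ AddCircle (q : ℝ) :=
  QuotientAddGroup.map _ _ (Rat.castHom ℝ).toAddMonoidHom <| by
    rintro _ ⟨n, rfl⟩
    exact ⟨n, by simp⟩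

theorem ratCastHom_injective (q : ℚ) : Function.Injective (ratCastHom q) := by
  refine (injective_iff_map_eq_zero _).mpr fun y hy => ?_
  induction y using QuotientAddGroup.induction_on with
  | H r =>
    obtain ⟨n, hn⟩ := (coe_eq_zero_iff (q : ℝ)).mp hy
    have hn' : ((n • q : ℚ) : ℝ) = r := by simpa using hn
    exact (coe_eq_zero_iff q).mpr ⟨n, by exact_mod_cast hn'⟩

end AddCircle

namespace PontryaginDual

theorem forall_apply_eq_one_of_dense {G : Type*} [Monoid G] [TopologicalSpace G]
    {S : Set (PontryaginDual G)} (hS : Dense S) {g : G} (h : ∀ χ ∈ S, χ g = 1) :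
    ∀ χ : PontryaginDual G, χ g = 1 :=
  hS.induction h <| isClosed_eq
    (continuous_eval_const g : Continuous fun χ : G →ₜ* Circle => χ g) continuous_const

theorem apply_pow_orderOf_eq_one {G : Type*} [Monoid G] [TopologicalSpace G]
    (χ : PontryaginDual G) (g : G) : χ g ^ orderOf χ = 1 :=
  (ContinuousMonoidHom.pow_apply χ _ g).symm.trans
    (congrArg (fun ψ : PontryaginDual G => ψ g) (pow_orderOf_eq_one χ))

theorem exists_apply_ne_one {G : Type*} [CommGroup G] [TopologicalSpace G] [DiscreteTopology G]
    {g : G} (hg : g ≠ 1) : ∃ χ : PontryaginDual G, χ g ≠ 1 := by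
  obtain ⟨c, hc⟩ := CharacterModule.exists_character_apply_ne_zero_of_ne_zero
    (a := Additive.ofMul g) hg
  let χ : G →* Circle := AddCircle.toCircle_addChar.toMonoidHom.comp
    (AddMonoidHom.toMultiplicative ((AddCircle.ratCastHom 1).comp c))
  refine ⟨⟨χ, continuous_of_discreteTopology⟩, fun h => hc ?_⟩
  replace h : AddCircle.toCircle (AddCircle.ratCastHom 1 (c (Additive.ofMul g))) = 1 := h
  refine AddCircle.ratCastHom_injective 1 ?_
  rw [map_zero]
  apply AddCircle.injective_toCircle (by norm_num)
  rwa [AddCircle.toCircle_zero]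

end PontryaginDual

theorem inter_smul_pow_eq_bot_of_dense_torsion_dual
    (p : ℕ) (hp : p.Prime) (A : Type*) [AddCommGroup A]
    [TopologicalSpace A] [DiscreteTopology A]
    (hpgroup : ∀ a : A, ∃ n : ℕ, (p ^ n : ℕ) • a = 0)
    (hdense : Dense {χ : PontryaginDual (Multiplicative A) | IsOfFinOrder χ}) :
    (⋂ n : ℕ, Set.range fun a : A => (p ^ n : ℕ) • a) = {0} := by
  refine Set.eq_singleton_iff_unique_mem.mpr ⟨Set.mem_iInter.mpr fun n => ⟨0, smul_zero _⟩, ?_⟩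
  intro x hx
  have hdiv (n : ℕ) : ∃ b : Multiplicative A, b ^ p ^ n = .ofAdd x := by
    obtain ⟨a, ha⟩ := Set.mem_iInter.mp hx n
    exact ⟨.ofAdd a, by rw [← ofAdd_nsmul]; exact congrArg Multiplicative.ofAdd ha⟩
  have htorsion (χ : PontryaginDual (Multiplicative A)) (hχ : IsOfFinOrder χ) :
      χ (.ofAdd x) = 1 :=
    map_eq_one_of_forall_exists_pow_prime_pow_eq hp (fun g => hpgroup g.toAdd) χ
      hχ.orderOf_pos χ.apply_pow_orderOf_eq_one hdiv
  by_contra hx0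
  obtain ⟨χ, hχ⟩ := PontryaginDual.exists_apply_ne_one (ofAdd_eq_one.not.mpr hx0)
  exact hχ (PontryaginDual.forall_apply_eq_one_of_dense hdense htorsion χ)
end
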